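/- Let α satisfy φ < α < 2, where φ = (1 + √5)/2 is the golden ratio, and let A, B, a, b be positive integers with A ≤ (α/(α − 1))·B. Then A·(d_α + c_α·log₂ a) + A + B ≤ (A + B)·(d_α − 1 + c_α·log₂(a + b)). -/

import Mathlib

open Real

/-- The constant `c_α = (α+1)/((α+1)·log₂(α+1) − α·log₂ α)`. -/
noncomputable def cA (α : ℝ) : ℝ :=
  (α + 1) / ((α + 1) * logb 2 (α + 1) - α * logb 2 α)

/-- `k₀(α)` is the least `ℓ ∈ ℕ` such that `(α² − α − 1)/(α − 1) ≥ α^(−ℓ)`. -/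
noncomputable def k0 (α : ℝ) : ℕ :=
  sInf {ℓ : ℕ | (α ^ 2 - α - 1) / (α - 1) ≥ α ^ (-(ℓ : ℝ))}

/-- The constant `d_α = 2^(k₀(α)+1)·max{k₀(α)+1, 3}·(2α − 1)/(α − 1) + 1`. -/
noncomputable def dA (α : ℝ) : ℝ :=
  2 ^ (k0 α + 1) * max ((k0 α : ℝ) + 1) 3 * (2 * α - 1) / (α - 1) + 1

/-!
Expanding both sides, the claim is `2(A + B) ≤ B·d_α + c_α·((A + B)·log(a + b) − A·log a)`.
The second summand is nonnegative because `c_α ≥ 0` and `0 ≤ log a ≤ log(a + b)`. For the first,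
`A ≤ α/(α − 1)·B` gives `A + B ≤ r·B` with `r = (2α − 1)/(α − 1)`, while `d_α ≥ 6r + 1` because
`2^(k₀+1) ≥ 2` and `max{k₀ + 1, 3} ≥ 3`.
-/

theorem cA_nonneg {α : ℝ} (hα : 0 < α) : 0 ≤ cA α := by
  have hlog_succ : 0 ≤ logb 2 (α + 1) := logb_nonneg one_lt_two (by linarith)
  have hlog_mono : logb 2 α ≤ logb 2 (α + 1) := logb_le_logb_of_le one_lt_two hα (by linarith)
  exact div_nonneg (by linarith) (by nlinarith)

theorem six_mul_add_one_le_dA {α : ℝ} (hα : 1 < α) :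
    6 * ((2 * α - 1) / (α - 1)) + 1 ≤ dA α := by
  have hr : 0 ≤ (2 * α - 1) / (α - 1) := div_nonneg (by linarith) (by linarith)
  have hpow : (2 : ℝ) ≤ 2 ^ (k0 α + 1) :=
    le_self_pow₀ one_le_two (Nat.succ_ne_zero _)
  have hmax : (3 : ℝ) ≤ max ((k0 α : ℝ) + 1) 3 := le_max_right _ _
  have hsix : (6 : ℝ) ≤ 2 ^ (k0 α + 1) * max ((k0 α : ℝ) + 1) 3 := by nlinarith
  rw [dA, mul_div_assoc]
  gcongr

theorem add_le_of_le_div_sub_one_mul {α x y : ℝ} (hα : 1 < α) (h : x ≤ α / (α - 1) * y) :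
    x + y ≤ (2 * α - 1) / (α - 1) * y := by
  have hsum : (2 * α - 1) / (α - 1) = α / (α - 1) + 1 := by
    field_simp [(sub_pos.2 hα).ne']
    ring
  rw [hsum]
  linarith

theorem merge_bound {A B c d x y : ℝ} (hA : 0 ≤ A) (hB : 0 ≤ B) (hc : 0 ≤ c) (hx : 0 ≤ x)
    (hxy : x ≤ y) (hd : 2 * (A + B) ≤ B * d) :
    A * (d + c * x) + A + B ≤ (A + B) * (d - 1 + c * y) := by
  have hgain : 0 ≤ c * (A * (y - x) + B * y) := by
    have : 0 ≤ y := hx.trans hxy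
    have : 0 ≤ y - x := sub_nonneg.2 hxy
    positivity
  nlinarith

theorem alphamerge_C_general (α : ℝ) (hφ : (1 + Real.sqrt 5) / 2 < α)
    (A B a b : ℕ) (ha : 0 < a)
    (h1 : (A : ℝ) ≤ α / (α - 1) * B) :
    (A : ℝ) * (dA α + cA α * logb 2 a) + A + B
      ≤ ((A : ℝ) + B) * (dA α - 1 + cA α * logb 2 ((a : ℝ) + b)) := by
  have hα : 1 < α := one_lt_goldenRatio.trans hφ
  have ha' : (1 : ℝ) ≤ a := Nat.one_le_cast.2 ha
  have hAB := add_le_of_le_div_sub_one_mul hα h1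
  refine merge_bound A.cast_nonneg B.cast_nonneg (cA_nonneg (by linarith))
    (logb_nonneg one_lt_two ha') (logb_le_logb_of_le one_lt_two (by linarith) (by simp)) ?_
  have hB : (0 : ℝ) ≤ B := B.cast_nonneg
  have hr : 0 ≤ (2 * α - 1) / (α - 1) := div_nonneg (by linarith) (by linarith)
  calc 2 * ((A : ℝ) + B) ≤ 2 * ((2 * α - 1) / (α - 1) * B) := by gcongr
    _ ≤ B * dA α := by nlinarith [six_mul_add_one_le_dA hα]

/-- Lemma 7(b): for `φ < α < 2`, if `A ≤ (α/(α−1))·B` then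
`A·(d_α + c_α·log a) + A + B ≤ (A+B)·(d_α − 1 + c_α·log(a+b))`. -/
theorem alphamerge_C (α : ℝ) (hφ : (1 + Real.sqrt 5) / 2 < α) (hα2 : α < 2)
    (A B a b : ℕ) (hA : 0 < A) (hB : 0 < B) (ha : 0 < a) (hb : 0 < b)
    (h1 : (A : ℝ) ≤ α / (α - 1) * B) :
    (A : ℝ) * (dA α + cA α * logb 2 a) + A + B
      ≤ ((A : ℝ) + B) * (dA α - 1 + cA α * logb 2 ((a : ℝ) + b)) :=
  alphamerge_C_general α hφ A B a b ha h1
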